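/- Energy inequality for Burgers in d dimensions: let u, u_θ : D × [t₀,T] → ℝ^d be C¹ with u solving ∂_t u + (u·∇)u = 0, let R := ∂_t u_θ + (u_θ·∇)u_θ, and û := u_θ - u. Then pointwise ∂_t(‖û‖₂²/2) = û·R + û·((u·∇)u - (u_θ·∇)u_θ), hence for each fixed t, ∫_D ∂_t ‖û‖₂² dx ≤ C₁ ∫_D ‖û‖₂² dx + ∫_D ‖R‖₂² dx + d²‖∇u‖_∞ ∫_D ‖u‖₂² dx + d²‖∇u_θ‖_∞ ∫_D ‖u_θ‖₂² dx, where C₁ = 1 + d²‖∇u‖_∞ + d²‖∇u_θ‖_∞. -/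

import Mathlib

/-!
Since the exact solution satisfies `∂ₜu = -(u·∇)u`, the time derivative `û·(∂ₜu_θ - ∂ₜu)` of
`‖û‖²/2` regroups as `û·R + û·((u·∇)u - (u_θ·∇)u_θ)`. The integrated inequality then already
holds pointwise: Young's inequality bounds `2 û·R`, and each convection term
`2 Σᵢ ûᵢ Σⱼ vⱼ ∂ⱼvᵢ` is bounded by splitting every product `2 ûᵢ vⱼ ≤ ûᵢ² + vⱼ²`, which costs a
factor `d` from the free index (and `d ≤ d²`).
-/

open MeasureTheory Finset

theorem hasDerivAt_half_sum_sq {ι : Type*} [Fintype ι] {v : ℝ → ι → ℝ} {v' : ι → ℝ} {t : ℝ}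
    (hv : ∀ i, HasDerivAt (fun s => v s i) (v' i) t) :
    HasDerivAt (fun s => (∑ i, v s i ^ 2) / 2) (∑ i, v t i * v' i) t := by
  refine ((HasDerivAt.fun_sum fun i _ => (hv i).pow 2).div_const 2).congr_deriv ?_
  rw [sum_div]
  exact sum_congr rfl fun i _ => by ring

theorem two_mul_sum_mul_le_sum_sq_add_sum_sq {ι : Type*} [Fintype ι] (a b : ι → ℝ) :
    2 * ∑ i, a i * b i ≤ ∑ i, a i ^ 2 + ∑ i, b i ^ 2 := by
  rw [mul_sum, ← sum_add_distrib]
  exact sum_le_sum fun i _ => by linarith [two_mul_le_add_sq (a i) (b i)]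

theorem two_mul_sum_mul_sum_mul_le {ι : Type*} [Fintype ι] (a b : ι → ℝ) (c : ι → ι → ℝ)
    {M : ℝ} (hc : ∀ i j, |c i j| ≤ M) :
    2 * ∑ i, a i * ∑ j, b j * c i j ≤
      Fintype.card ι * M * (∑ i, a i ^ 2 + ∑ j, b j ^ 2) := by
  calc 2 * ∑ i, a i * ∑ j, b j * c i j = ∑ i, ∑ j, (2 * a i * b j) * c i j := by
        simp only [mul_sum]
        exact sum_congr rfl fun i _ => sum_congr rfl fun j _ => by ring
    _ ≤ ∑ i, ∑ j, M * (a i ^ 2 + b j ^ 2) := by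
        refine sum_le_sum fun i _ => sum_le_sum fun j _ => ?_
        have hab : |2 * a i * b j| ≤ a i ^ 2 + b j ^ 2 := by
          rw [abs_le]
          constructor <;> nlinarith [sq_nonneg (a i - b j), sq_nonneg (a i + b j)]
        calc 2 * a i * b j * c i j ≤ |2 * a i * b j| * |c i j| := by
              rw [← abs_mul]; exact le_abs_self _
          _ ≤ (a i ^ 2 + b j ^ 2) * M := mul_le_mul hab (hc i j) (abs_nonneg _) (by positivity)
          _ = M * (a i ^ 2 + b j ^ 2) := mul_comm _ _
    _ = Fintype.card ι * M * (∑ i, a i ^ 2 + ∑ j, b j ^ 2) := by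
        simp only [← mul_sum, sum_add_distrib, sum_const, card_univ, nsmul_eq_mul]
        ring

theorem two_mul_sum_mul_sum_mul_le_card_sq {ι : Type*} [Fintype ι] (a b : ι → ℝ)
    (c : ι → ι → ℝ) {M : ℝ} (hM : 0 ≤ M) (hc : ∀ i j, |c i j| ≤ M) :
    2 * ∑ i, a i * ∑ j, b j * c i j ≤
      (Fintype.card ι : ℝ) ^ 2 * M * (∑ i, a i ^ 2 + ∑ j, b j ^ 2) := by
  have hcard : (Fintype.card ι : ℝ) ≤ (Fintype.card ι : ℝ) ^ 2 := by
    exact_mod_cast Nat.le_self_pow two_ne_zero _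
  refine (two_mul_sum_mul_sum_mul_le a b c hc).trans ?_
  gcongr

/-- The integrand of the energy inequality, with `a = û`, `R` the residual and `b, c` (resp.
`bθ, cθ`) the values and Jacobian of `u` (resp. `u_θ`) at one point. -/
theorem energy_integrand_le {ι : Type*} [Fintype ι] (a R b bθ : ι → ℝ) (c cθ : ι → ι → ℝ)
    {M Mθ : ℝ} (hM : 0 ≤ M) (hMθ : 0 ≤ Mθ)
    (hc : ∀ i j, |c i j| ≤ M) (hcθ : ∀ i j, |cθ i j| ≤ Mθ) :
    2 * ∑ i, a i * (R i + (∑ j, b j * c i j - ∑ j, bθ j * cθ i j)) ≤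
      (1 + (Fintype.card ι : ℝ) ^ 2 * M + (Fintype.card ι : ℝ) ^ 2 * Mθ) * ∑ i, a i ^ 2
        + ∑ i, R i ^ 2 + (Fintype.card ι : ℝ) ^ 2 * M * ∑ i, b i ^ 2
        + (Fintype.card ι : ℝ) ^ 2 * Mθ * ∑ i, bθ i ^ 2 := by
  have hsplit : 2 * ∑ i, a i * (R i + (∑ j, b j * c i j - ∑ j, bθ j * cθ i j)) =
      2 * ∑ i, a i * R i + 2 * ∑ i, a i * ∑ j, b j * c i j
        + 2 * ∑ i, a i * ∑ j, bθ j * -cθ i j := by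
    simp only [mul_neg, sum_neg_distrib, mul_add, mul_sub, sum_add_distrib, sum_sub_distrib]
    ring
  rw [hsplit]
  linarith [two_mul_sum_mul_le_sum_sq_add_sum_sq a R,
    two_mul_sum_mul_sum_mul_le_card_sq a b c hM hc,
    two_mul_sum_mul_sum_mul_le_card_sq a bθ (fun i j => -cθ i j) hMθ
      fun i j => (abs_neg (cθ i j)).trans_le (hcθ i j)]

theorem stmt11_general (d : ℕ) (D : Set (Fin d → ℝ)) (μ : Measure (Fin d → ℝ))
    (t₀ T : ℝ)
    (u uθ ut uθt : (Fin d → ℝ) → ℝ → Fin d → ℝ)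
    (Du Duθ : (Fin d → ℝ) → ℝ → Fin d → Fin d → ℝ)
    (M Mθ : ℝ) (hM : 0 ≤ M) (hMθ : 0 ≤ Mθ)
    (hut : ∀ x, ∀ t ∈ Set.Icc t₀ T, ∀ i, HasDerivAt (fun s => u x s i) (ut x t i) t)
    (huθt : ∀ x, ∀ t ∈ Set.Icc t₀ T, ∀ i, HasDerivAt (fun s => uθ x s i) (uθt x t i) t)
    (hbM : ∀ x, ∀ t ∈ Set.Icc t₀ T, ∀ i j, |Du x t i j| ≤ M)
    (hbMθ : ∀ x, ∀ t ∈ Set.Icc t₀ T, ∀ i j, |Duθ x t i j| ≤ Mθ)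
    (hpde : ∀ x, ∀ t ∈ Set.Icc t₀ T, ∀ i, ut x t i + ∑ j, u x t j * Du x t i j = 0)
    (t : ℝ) (htmem : t ∈ Set.Icc t₀ T)
    (hi1 : IntegrableOn (fun x => ∑ i, (uθ x t i - u x t i)^2) D μ)
    (hi2 : IntegrableOn
      (fun x => ∑ i, (uθt x t i + ∑ j, uθ x t j * Duθ x t i j)^2) D μ)
    (hi3 : IntegrableOn (fun x => ∑ i, (u x t i)^2) D μ)
    (hi4 : IntegrableOn (fun x => ∑ i, (uθ x t i)^2) D μ)
    (hi5 : IntegrableOn (fun x => 2 * ∑ i, (uθ x t i - u x t i) *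
        ((uθt x t i + ∑ j, uθ x t j * Duθ x t i j)
          + ((∑ j, u x t j * Du x t i j) - ∑ j, uθ x t j * Duθ x t i j))) D μ) :
    (∀ x, HasDerivAt (fun s => (∑ i, (uθ x s i - u x s i)^2) / 2)
        ((∑ i, (uθ x t i - u x t i) * (uθt x t i + ∑ j, uθ x t j * Duθ x t i j))
          + ∑ i, (uθ x t i - u x t i) *
              ((∑ j, u x t j * Du x t i j) - ∑ j, uθ x t j * Duθ x t i j)) t) ∧
    ((∫ x in D, (2 * ∑ i, (uθ x t i - u x t i) *
          ((uθt x t i + ∑ j, uθ x t j * Duθ x t i j)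
            + ((∑ j, u x t j * Du x t i j) - ∑ j, uθ x t j * Duθ x t i j))) ∂μ)
      ≤ (1 + (d:ℝ)^2 * M + (d:ℝ)^2 * Mθ) *
            (∫ x in D, (∑ i, (uθ x t i - u x t i)^2) ∂μ)
        + (∫ x in D, (∑ i, (uθt x t i + ∑ j, uθ x t j * Duθ x t i j)^2) ∂μ)
        + (d:ℝ)^2 * M * (∫ x in D, (∑ i, (u x t i)^2) ∂μ)
        + (d:ℝ)^2 * Mθ * (∫ x in D, (∑ i, (uθ x t i)^2) ∂μ)) := by
  refine ⟨fun x => ?_, ?_⟩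
  · convert hasDerivAt_half_sum_sq (v := fun s i => uθ x s i - u x s i)
      (fun i => (huθt x t htmem i).sub (hut x t htmem i)) using 1
    rw [← sum_add_distrib]
    exact sum_congr rfl fun i _ => by linear_combination (uθ x t i - u x t i) * hpde x t htmem i
  · have hbound := fun x => energy_integrand_le (fun i => uθ x t i - u x t i)
      (fun i => uθt x t i + ∑ j, uθ x t j * Duθ x t i j) (u x t) (uθ x t)
      (Du x t) (Duθ x t) hM hMθ (hbM x t htmem) (hbMθ x t htmem)
    simp only [Fintype.card_fin] at hbound
    have h₁ := hi1.const_mul (1 + (d : ℝ) ^ 2 * M + (d : ℝ) ^ 2 * Mθ)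
    have h₁₂ := Integrable.fun_add h₁ hi2
    have h₁₂₃ := Integrable.fun_add h₁₂ (hi3.const_mul ((d : ℝ) ^ 2 * M))
    refine (setIntegral_mono hi5 (h₁₂₃.fun_add (hi4.const_mul _)) hbound).trans_eq ?_
    rw [integral_add h₁₂₃ (hi4.const_mul _), integral_add h₁₂ (hi3.const_mul _),
      integral_add h₁ hi2, integral_const_mul, integral_const_mul, integral_const_mul]

/-- Energy inequality for Burgers in d dimensions: with û = u_θ - u and
R = ∂_t u_θ + (u_θ·∇)u_θ, pointwise ∂_t(‖û‖²/2) = û·R + û·((u·∇)u - (u_θ·∇)u_θ),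
and for each fixed t,
∫_D ∂_t‖û‖² ≤ C₁∫_D ‖û‖² + ∫_D ‖R‖² + d²‖∇u‖_∞∫_D ‖u‖² + d²‖∇u_θ‖_∞∫_D ‖u_θ‖²,
with C₁ = 1 + d²‖∇u‖_∞ + d²‖∇u_θ‖_∞. -/
theorem stmt11 (d : ℕ) (D : Set (Fin d → ℝ)) (μ : Measure (Fin d → ℝ))
    (t₀ T : ℝ)
    (u uθ ut uθt : (Fin d → ℝ) → ℝ → Fin d → ℝ)
    (Du Duθ : (Fin d → ℝ) → ℝ → Fin d → Fin d → ℝ)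
    (M Mθ : ℝ) (hM : 0 ≤ M) (hMθ : 0 ≤ Mθ)
    (hut : ∀ x, ∀ t ∈ Set.Icc t₀ T, ∀ i, HasDerivAt (fun s => u x s i) (ut x t i) t)
    (huθt : ∀ x, ∀ t ∈ Set.Icc t₀ T, ∀ i, HasDerivAt (fun s => uθ x s i) (uθt x t i) t)
    (hDu : ∀ x, ∀ t ∈ Set.Icc t₀ T, ∀ i j,
      HasDerivAt (fun y => u (Function.update x j y) t i) (Du x t i j) (x j))
    (hDuθ : ∀ x, ∀ t ∈ Set.Icc t₀ T, ∀ i j,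
      HasDerivAt (fun y => uθ (Function.update x j y) t i) (Duθ x t i j) (x j))
    (hbM : ∀ x, ∀ t ∈ Set.Icc t₀ T, ∀ i j, |Du x t i j| ≤ M)
    (hbMθ : ∀ x, ∀ t ∈ Set.Icc t₀ T, ∀ i j, |Duθ x t i j| ≤ Mθ)
    (hpde : ∀ x, ∀ t ∈ Set.Icc t₀ T, ∀ i, ut x t i + ∑ j, u x t j * Du x t i j = 0)
    (t : ℝ) (htmem : t ∈ Set.Icc t₀ T)
    (hi1 : IntegrableOn (fun x => ∑ i, (uθ x t i - u x t i)^2) D μ)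
    (hi2 : IntegrableOn
      (fun x => ∑ i, (uθt x t i + ∑ j, uθ x t j * Duθ x t i j)^2) D μ)
    (hi3 : IntegrableOn (fun x => ∑ i, (u x t i)^2) D μ)
    (hi4 : IntegrableOn (fun x => ∑ i, (uθ x t i)^2) D μ)
    (hi5 : IntegrableOn (fun x => 2 * ∑ i, (uθ x t i - u x t i) *
        ((uθt x t i + ∑ j, uθ x t j * Duθ x t i j)
          + ((∑ j, u x t j * Du x t i j) - ∑ j, uθ x t j * Duθ x t i j))) D μ) :
    (∀ x, HasDerivAt (fun s => (∑ i, (uθ x s i - u x s i)^2) / 2)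
        ((∑ i, (uθ x t i - u x t i) * (uθt x t i + ∑ j, uθ x t j * Duθ x t i j))
          + ∑ i, (uθ x t i - u x t i) *
              ((∑ j, u x t j * Du x t i j) - ∑ j, uθ x t j * Duθ x t i j)) t) ∧
    ((∫ x in D, (2 * ∑ i, (uθ x t i - u x t i) *
          ((uθt x t i + ∑ j, uθ x t j * Duθ x t i j)
            + ((∑ j, u x t j * Du x t i j) - ∑ j, uθ x t j * Duθ x t i j))) ∂μ)
      ≤ (1 + (d:ℝ)^2 * M + (d:ℝ)^2 * Mθ) *
            (∫ x in D, (∑ i, (uθ x t i - u x t i)^2) ∂μ)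
        + (∫ x in D, (∑ i, (uθt x t i + ∑ j, uθ x t j * Duθ x t i j)^2) ∂μ)
        + (d:ℝ)^2 * M * (∫ x in D, (∑ i, (u x t i)^2) ∂μ)
        + (d:ℝ)^2 * Mθ * (∫ x in D, (∑ i, (uθ x t i)^2) ∂μ)) :=
  stmt11_general d D μ t₀ T u uθ ut uθt Du Duθ M Mθ hM hMθ hut huθt hbM hbMθ hpde t htmem hi1 hi2
    hi3 hi4 hi5
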